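/- Let P be a Łukasiewicz path, T = τ(P), and for each i let u_i be the internal node of T corresponding to the i-th up-step of P under the bijection τ (i.e., the i-th internal node of T in contour/preorder order). Then for every i, the i-th entry of the depth vector satisfies Depth(P)_i = lthorn(u_i). -/

import Mathlib

/-! ## Plane trees -/

/-- A plane tree: a root together with an ordered (left-to-right) list of subtrees.
A node is a *leaf* if it has no children, and *internal* otherwise. -/
inductive PTree : Type where
  | node : List PTree → PTree


namespace Luka

/-! ## Łukasiewicz paths

A path is encoded by its list of step increments: the step `(1,k)` (an up-step `U_k` of
degree `k`) is encoded by `k : ℤ` with `k ≥ 0`, and the down step `D = (1,-1)` by `-1`. -/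

/-- `P` is a Łukasiewicz path: it is nonempty, uses steps `(1,k)` with `k ≥ -1`,
stays (weakly) above the `x`-axis before its last step, and ends at height `-1`
(so that it goes strictly below the axis only at the last step, which is forced
to be the down-step `D`). -/
def IsLukas (P : List ℤ) : Prop :=
  P ≠ [] ∧ (∀ s ∈ P, -1 ≤ s) ∧ (∀ n, n < P.length → 0 ≤ (P.take n).sum) ∧ P.sum = -1

/-- The degrees of the up-steps of `P`, from left to right (the *profile* of `P`). -/
def upDegs (P : List ℤ) : List ℕ := (P.filter (fun s => 0 ≤ s)).map Int.toNat

/-- The profile multiset `𝔐(P)`: the multiset of degrees of the up-steps of `P`. -/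
def profileM (P : List ℤ) : Multiset ℕ := (upDegs P : Multiset ℕ)

/-- The degree of the first up-step of `P`, if any. -/
def firstUp? (P : List ℤ) : Option ℕ := (upDegs P).head?

/-- The degree of the last up-step of `P`, if any. -/
def lastUp? (P : List ℤ) : Option ℕ := (upDegs P).getLast?

/-- Auxiliary: starting from height `h`, record the starting height of every up-step. -/
def areaVecAux : ℤ → List ℤ → List ℤ
  | _, [] => []
  | h, s :: rest => (if 0 ≤ s then [h] else []) ++ areaVecAux (h + s) rest

/-- The area vector `Area(P)`: the `i`-th entry is the `y`-coordinate of the starting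
point of the `i`-th up-step of `P`. -/
def areaVec (P : List ℤ) : List ℤ := areaVecAux 0 P

/-- `area(P)`: the sum of the entries of the area vector (entries of a Łukasiewicz
path are nonnegative, so taking `Int.toNat` entrywise is harmless). -/
def area (P : List ℤ) : ℕ := ((areaVec P).map Int.toNat).sum

/-- Auxiliary computation of the depth values: `cur` is the depth value of the previous
step (`0` initially), and `stack` holds the pending depth values of the future matching
down-steps (top of the stack = value for the next matching down-step to come).
Reading an up-step `U_k` whose value is `cur` (inherited from the previous step) pushes
the values `cur+1, …, cur+k` for its `k` matching down-steps (its first matching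
down-step, which crosses its topmost interior level, gets `cur+1`, etc.); reading a
down-step pops its value.  The list returned records the value `d_i` of each up-step,
from left to right. -/
def depthVecAux : ℕ → List ℕ → List ℤ → List ℕ
  | _, _, [] => []
  | cur, stack, s :: rest =>
    if 0 ≤ s then
      cur :: depthVecAux cur ((List.range s.toNat).map (fun i => cur + i + 1) ++ stack) rest
    else
      match stack with
      | [] => depthVecAux cur [] rest
      | v :: st => depthVecAux v st rest

/-- The depth vector `Depth(P)`: the values `d_i` at the up-steps of `P`, left to right. -/
def depthVec (P : List ℤ) : List ℕ := depthVecAux 0 [] P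

/-- `depth(P)`: the sum of the entries of the depth vector. -/
def depth (P : List ℤ) : ℕ := (depthVec P).sum

/-- `P ∈ 𝓛_M`. -/
def MemL (M : Multiset ℕ) (P : List ℤ) : Prop := IsLukas P ∧ profileM P = M

/-- `P ∈ 𝓛_{a,M}`: first up-step of degree `a`, profile multiset `M ⊎ {a}`. -/
def MemLa (a : ℕ) (M : Multiset ℕ) (P : List ℤ) : Prop :=
  IsLukas P ∧ firstUp? P = some a ∧ profileM P = a ::ₘ M

/-- `P ∈ 𝓛_{M,b}`: last up-step of degree `b`, profile multiset `M ⊎ {b}`. -/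
def MemLb (M : Multiset ℕ) (b : ℕ) (P : List ℤ) : Prop :=
  IsLukas P ∧ lastUp? P = some b ∧ profileM P = b ::ₘ M

/-- `P ∈ 𝓛_{a,M,b}`: first up-step of degree `a`, last up-step of degree `b`,
profile multiset `M ⊎ {a, b}`. -/
def MemLab (a : ℕ) (M : Multiset ℕ) (b : ℕ) (P : List ℤ) : Prop :=
  IsLukas P ∧ firstUp? P = some a ∧ lastUp? P = some b ∧ profileM P = a ::ₘ b ::ₘ M

/-! ## Plane-tree statistics -/

/-- The (ordered) children of the root of a plane tree. -/
def children : PTree → List PTree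
  | .node ts => ts

/-- The degree of (the root of) a plane tree: its number of children. -/
def numChildren (t : PTree) : ℕ := (children t).length

mutual
/-- Number of internal nodes of a plane tree. -/
def internCount : PTree → ℕ
  | .node [] => 0
  | .node (t :: ts) => 1 + internCountL (t :: ts)
def internCountL : List PTree → ℕ
  | [] => 0
  | t :: ts => internCount t + internCountL ts
end

mutual
/-- `lthornT T` = the sum of `lthorn(u)` over all internal nodes `u` of `T`, where
`lthorn(u)` is the number of descending edges of strict ancestors `v` of `u` lying to
the left of the path from `v` to `u`.  (Every internal node of the subtree rooted at
the `i`-th child (0-indexed) of a node gains `i` left thorns from that node.) -/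
def lthornT : PTree → ℕ
  | .node ts => lthornL 0 ts
def lthornL : ℕ → List PTree → ℕ
  | _, [] => 0
  | i, t :: ts => lthornT t + i * internCount t + lthornL (i + 1) ts
end

mutual
/-- `rthornT T` = the sum of `rthorn(u)` over all internal nodes `u` of `T`, where
`rthorn(u)` is the number of descending edges of strict ancestors `v` of `u` lying to
the right of the path from `v` to `u`. -/
def rthornT : PTree → ℕ
  | .node ts => rthornL ts
def rthornL : List PTree → ℕ
  | [] => 0
  | t :: ts => rthornT t + ts.length * internCount t + rthornL ts
end

mutual
/-- The list of the values `lthorn(u)` for the internal nodes `u` of `T`, in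
contour-walk (preorder) order. -/
def lthornList : PTree → List ℕ
  | .node [] => []
  | .node (t :: ts) => 0 :: lthornLL 0 (t :: ts)
def lthornLL : ℕ → List PTree → List ℕ
  | _, [] => []
  | i, t :: ts => (lthornList t).map (· + i) ++ lthornLL (i + 1) ts
end

mutual
/-- The list of the values `rthorn(u)` for the internal nodes `u` of `T`, in
contour-walk (preorder) order. -/
def rthornList : PTree → List ℕ
  | .node [] => []
  | .node (t :: ts) => 0 :: rthornLL (t :: ts)
def rthornLL : List PTree → List ℕ
  | [] => []
  | t :: ts => (rthornList t).map (· + ts.length) ++ rthornLL ts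
end

/-! ## The bijections `λ` and `τ` -/

mutual
/-- `λ`: record each node of the tree at its first visit in the left-to-right contour
walk: `U_k` (i.e. `k`) for an internal node with `k+1` children, `D` (i.e. `-1`)
for a leaf. -/
def lambdaT : PTree → List ℤ
  | .node ts => ((ts.length : ℤ) - 1) :: lambdaL ts
def lambdaL : List PTree → List ℤ
  | [] => []
  | t :: ts => lambdaT t ++ lambdaL ts
end

/-- Auxiliary for `τ`: reading the path from right to left, maintain the stack of the
already-built subtrees (in left-to-right order); a down-step `D` creates a leaf and an
up-step `U_k` grabs the `k+1` topmost subtrees as its children.  This builds the same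
tree as the left-to-right "leftmost bud" construction. -/
def tauStack (P : List ℤ) : List PTree :=
  P.foldr (fun s st =>
    if s < 0 then PTree.node [] :: st
    else PTree.node (st.take (s.toNat + 1)) :: st.drop (s.toNat + 1)) []

/-- `τ`: the plane tree associated with a Łukasiewicz path. -/
def tau (P : List ℤ) : PTree := (tauStack P).headD (.node [])

mutual
/-- The mirror of a plane tree: reverse the left-to-right order of the children of
every internal node. -/
def mir : PTree → PTree
  | .node ts => .node (mirL ts).reverse
def mirL : List PTree → List PTree
  | [] => []
  | t :: ts => mir t :: mirL ts
end

mutual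
/-- The subtrees rooted at the internal nodes of `T`, in contour-walk (preorder)
order. -/
def internalSubtrees : PTree → List PTree
  | .node [] => []
  | .node (t :: ts) => .node (t :: ts) :: internalSubtreesL (t :: ts)
def internalSubtreesL : List PTree → List PTree
  | [] => []
  | t :: ts => internalSubtrees t ++ internalSubtreesL ts
end

/-- The multiset of degrees of the non-root internal nodes of `T`. -/
def nonRootInternalDegs (T : PTree) : Multiset ℕ :=
  (((internalSubtreesL (children T)).map numChildren : List ℕ) : Multiset ℕ)

/-! ## Lodestars and the lodestar swap -/

/-- A node is a lodestar-type node if it is internal and all its children are leaves. -/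
def isLodestarNode (t : PTree) : Bool :=
  !(children t).isEmpty && (children t).all (fun c => (children c).isEmpty)

mutual
/-- The subtree rooted at the *left lodestar* of `T`: the first internal node, in
contour-walk (preorder) order, all of whose children are leaves (if it exists). -/
def leftLode? : PTree → Option PTree
  | .node ts =>
    if isLodestarNode (.node ts) then some (.node ts) else leftLodeL? ts
def leftLodeL? : List PTree → Option PTree
  | [] => none
  | t :: ts =>
    match leftLode? t with
    | some r => some r
    | none => leftLodeL? ts
end

mutual
/-- The subtree rooted at the *right lodestar* of `T`: the last internal node, in
contour-walk (preorder) order, all of whose children are leaves (if it exists). -/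
def rightLode? : PTree → Option PTree
  | .node ts =>
    match rightLodeL? ts with
    | some r => some r
    | none => if isLodestarNode (.node ts) then some (.node ts) else none
def rightLodeL? : List PTree → Option PTree
  | [] => none
  | t :: ts =>
    match rightLodeL? ts with
    | some r => some r
    | none => rightLode? t
end

mutual
/-- Replace the left lodestar of `T` (first preorder all-leaf-children internal node)
by the tree `r`; `none` if `T` has no internal node. -/
def replF : PTree → PTree → Option PTree
  | r, .node ts =>
    if isLodestarNode (.node ts) then some r
    else (replFL r ts).map PTree.node
def replFL : PTree → List PTree → Option (List PTree)
  | _, [] => none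
  | r, t :: ts =>
    match replF r t with
    | some t' => some (t' :: ts)
    | none => (replFL r ts).map (t :: ·)
end

mutual
/-- Replace the right lodestar of `T` (last preorder all-leaf-children internal node)
by the tree `r`; `none` if `T` has no internal node. -/
def replL : PTree → PTree → Option PTree
  | r, .node ts =>
    match replLL r ts with
    | some ts' => some (.node ts')
    | none => if isLodestarNode (.node ts) then some r else none
def replLL : PTree → List PTree → Option (List PTree)
  | _, [] => none
  | r, t :: ts =>
    match replLL r ts with
    | some ts' => some (t :: ts')
    | none => (replL r t).map (· :: ts)
end

/-- The lodestar swap: exchange the subtrees rooted at the left lodestar and the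
right lodestar of `T` (each a node together with its pendant leaves). -/
def lodeSwap (T : PTree) : PTree :=
  match leftLode? T, rightLode? T with
  | some L, some R => ((replF R T).bind (replL L)).getD T
  | _, _ => T

end Luka

/-! On Łukasiewicz paths `λ` inverts `τ`, so it suffices to read the depth values off `λ(T)`.
In `λ(T)` a node with children `t₀, …, t_k` is the step `U_k` followed by `λ(t₀) ⋯ λ(t_k)`, and
its `k` matching down-steps are the final leaves of `λ(t₀), …, λ(t_{k-1})`. Hence `λ(tᵢ)` is read
from depth `d + i`: exactly the `i` left thorns that this node gives to each internal node
of `tᵢ`. -/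

namespace Luka

lemma lambdaL_append (A B : List PTree) : lambdaL (A ++ B) = lambdaL A ++ lambdaL B := by
  induction A with
  | nil => simp [lambdaL]
  | cons t ts ih => simp [lambdaL, ih]

lemma tauStack_cons (s : ℤ) (P : List ℤ) :
    tauStack (s :: P) = if s < 0 then PTree.node [] :: tauStack P
      else PTree.node ((tauStack P).take (s.toNat + 1)) :: (tauStack P).drop (s.toNat + 1) :=
  rfl

/-- The suffix condition guarantees that each up-step `U_k` finds the `k + 1` subtrees it
grabs. -/
lemma lambdaL_tauStack (P : List ℤ) (hstep : ∀ s ∈ P, -1 ≤ s)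
    (hsuffix : ∀ Q, Q <:+ P → Q ≠ [] → Q.sum ≤ -1) :
    lambdaL (tauStack P) = P ∧ ((tauStack P).length : ℤ) = -P.sum := by
  induction P with
  | nil => simp [tauStack, lambdaL]
  | cons s P ih =>
    obtain ⟨hlam, hlen⟩ := ih (fun x hx => hstep x (List.mem_cons_of_mem s hx))
      (fun Q hQ hne => hsuffix Q (hQ.trans (List.suffix_cons s P)) hne)
    rw [tauStack_cons]
    by_cases hs : s < 0
    · obtain rfl : s = -1 := le_antisymm (by omega) (hstep s List.mem_cons_self)
      simp only [if_pos hs, lambdaL, lambdaT, hlam, List.length_cons, List.sum_cons]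
      constructor
      · simp
      · push_cast; omega
    · have hsum : s + P.sum ≤ -1 := by
        simpa using hsuffix (s :: P) (List.suffix_refl _) (List.cons_ne_nil s P)
      have htake : ((tauStack P).take (s.toNat + 1)).length = s.toNat + 1 := by
        rw [List.length_take]; omega
      simp only [if_neg hs, lambdaL, lambdaT, htake, List.cons_append, ← lambdaL_append,
        List.take_append_drop, hlam, List.length_cons, List.length_drop, List.sum_cons]
      constructor
      · congr 1; omega
      · push_cast [show s.toNat + 1 ≤ (tauStack P).length by omega]; omega

lemma IsLukas.suffix_sum_le {P Q : List ℤ} (hP : IsLukas P) (hQ : Q <:+ P) (hne : Q ≠ []) :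
    Q.sum ≤ -1 := by
  obtain ⟨-, -, hprefix, hsum⟩ := hP
  obtain ⟨A, rfl⟩ := hQ
  have hA : 0 ≤ A.sum := by
    simpa using hprefix A.length (by simpa using List.length_pos_iff.mpr hne)
  rw [List.sum_append] at hsum
  omega

lemma lambdaT_tau {P : List ℤ} (hP : IsLukas P) : lambdaT (tau P) = P := by
  obtain ⟨hlam, hlen⟩ := lambdaL_tauStack P hP.2.1 fun Q => hP.suffix_sum_le
  rw [hP.2.2.2] at hlen
  obtain ⟨T, hT⟩ := List.length_eq_one_iff.mp (by omega : (tauStack P).length = 1)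
  simpa [tau, hT, lambdaL] using hlam

lemma depthVecAux_up (c : ℕ) (st : List ℕ) {s : ℤ} (hs : 0 ≤ s) (rest : List ℤ) :
    depthVecAux c st (s :: rest) = c :: depthVecAux c (List.range' (c + 1) s.toNat ++ st) rest := by
  have hshift : (fun i => c + i + 1) = (c + 1 + ·) := by funext i; omega
  simp only [depthVecAux, if_pos hs, List.range'_eq_map_range, hshift]

lemma depthVecAux_down (c : ℕ) (st : List ℕ) (rest : List ℤ) :
    depthVecAux c st (-1 :: rest) = depthVecAux (st.headD c) st.tail rest := by
  cases st <;> simp [depthVecAux]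

lemma lthornLL_add (ts : List PTree) (i j : ℕ) :
    lthornLL (i + j) ts = (lthornLL i ts).map (· + j) := by
  induction ts generalizing i with
  | nil => simp [lthornLL]
  | cons t ts ih =>
    rw [lthornLL, lthornLL, List.map_append, List.map_map, Nat.add_right_comm, ih]
    congr 1
    exact List.map_congr_left fun a _ => by simp only [Function.comp_apply]; omega

/- Reading `λ(T)` pops exactly one entry of the pending stack, at its final leaf. When that
stack is empty the value left behind is irrelevant, hence the existential. -/
mutual

theorem depthVecAux_lambdaT (T : PTree) (c : ℕ) (st : List ℕ) (rest : List ℤ) :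
    ∃ c', depthVecAux c st (lambdaT T ++ rest)
      = (lthornList T).map (· + c) ++ depthVecAux (st.headD c') st.tail rest := by
  match T with
  | .node [] =>
    refine ⟨c, ?_⟩
    simpa [lambdaT, lambdaL, lthornList] using depthVecAux_down c st rest
  | .node (t :: ts) =>
    obtain ⟨c', h⟩ := depthVecAux_lambdaL (t :: ts) (List.cons_ne_nil t ts) c st rest
    refine ⟨c', ?_⟩
    have hup := depthVecAux_up c st (s := ts.length) (by positivity) (lambdaL (t :: ts) ++ rest)
    simp only [Int.toNat_natCast] at hup
    simpa [lambdaT, hup, lthornList] using h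

theorem depthVecAux_lambdaL (ts : List PTree) (hts : ts ≠ []) (c : ℕ) (st : List ℕ)
    (rest : List ℤ) :
    ∃ c', depthVecAux c (List.range' (c + 1) (ts.length - 1) ++ st) (lambdaL ts ++ rest)
      = (lthornLL 0 ts).map (· + c) ++ depthVecAux (st.headD c') st.tail rest := by
  match ts with
  | [t] =>
    simpa [lambdaL, lthornLL] using depthVecAux_lambdaT t c st rest
  | t :: t' :: ts' =>
    obtain ⟨_, ht⟩ := depthVecAux_lambdaT t c (List.range' (c + 1) (ts'.length + 1) ++ st)
      (lambdaL (t' :: ts') ++ rest)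
    obtain ⟨c', hts'⟩ := depthVecAux_lambdaL (t' :: ts') (List.cons_ne_nil t' ts') (c + 1) st rest
    refine ⟨c', ?_⟩
    simp only [List.length_cons, Nat.add_sub_cancel] at ht hts' ⊢
    rw [lambdaL, List.append_assoc, ht]
    have hshift : lthornLL 1 (t' :: ts') = (lthornLL 0 (t' :: ts')).map (· + 1) :=
      lthornLL_add _ 0 1
    simp only [List.range'_succ, List.cons_append, List.headD_cons, List.tail_cons, hts']
    conv_rhs => rw [lthornLL, hshift]
    simp [Function.comp_def, add_assoc, add_comm 1 c]

end

end Luka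

open Luka in
/-- **Refined Proposition 3.4.**  Let `P` be a Łukasiewicz path and `T = τ(P)`.  The
`i`-th up-step of `P` corresponds to the `i`-th internal node `u_i` of `T` in
contour-walk (preorder) order, and for every `i` one has `Depth(P)_i = lthorn(u_i)`:
the depth vector coincides, entry by entry, with the list of left-thorn numbers of the
internal nodes of `T` in preorder. -/
theorem depthVec_eq_lthornList_tau (P : List ℤ) (hP : IsLukas P) :
    ∀ i : ℕ, (depthVec P)[i]? = (lthornList (tau P))[i]? := by
  obtain ⟨_, h⟩ := depthVecAux_lambdaT (tau P) 0 [] []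
  have hdepth : depthVec P = lthornList (tau P) := by
    simpa [depthVec, lambdaT_tau hP, depthVecAux] using h
  simp [hdepth]
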